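/- Let f : U → V be a map in the set-up such that each connected component of V contains at most one critical point of f, and assume (∗∗). Let [c1] and [c2] be two distinct equivalence classes, and for i = 1, 2 let W_i be a nice set consisting of finitely many puzzle pieces such that each piece of W_i contains a point of [c_i]. Suppose [c2] does not accumulate to [c1], and the minimal depth of the components of W_2 is greater than or equal to the maximal depth of the components of W_1. Then W_1 ∪ W_2 is nice. -/

import Mathlib

open Set Function Topology

noncomputable section

/-- A (bounded) Jordan domain in the plane: a bounded connected open set whose
frontier is a Jordan curve, i.e. an injective continuous image of the circle. -/
def IsJordanDomain (Ω : Set ℂ) : Prop :=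
  IsOpen Ω ∧ IsConnected Ω ∧ Bornology.IsBounded Ω ∧
  ∃ g : Metric.sphere (0:ℂ) 1 → ℂ, Continuous g ∧ Function.Injective g ∧
    Set.range g = frontier Ω

/-- `A` is strictly contained in `X`: it is a proper subset of some connected
component of `X`. -/
def StrictlyContainedIn (A X : Set ℂ) : Prop :=
  ∃ x ∈ X, A ⊂ connectedComponentIn X x

/-- The set-up: `V ⊆ ℂ` is open with finitely many components, each a bounded Jordan
domain, with pairwise disjoint closures; `U` is open with closure contained in `V`,
with finitely many components with pairwise disjoint closures; `f : U → V` is proper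
holomorphic; every critical point of `f` lies in `K_f`. -/
structure Setup where
  U : Set ℂ
  V : Set ℂ
  f : ℂ → ℂ
  hV_open : IsOpen V
  hV_comp_finite : {C : Set ℂ | ∃ x ∈ V, C = connectedComponentIn V x}.Finite
  hV_jordan : ∀ x ∈ V, IsJordanDomain (connectedComponentIn V x)
  hV_disj : ∀ x ∈ V, ∀ y ∈ V, connectedComponentIn V x ≠ connectedComponentIn V y →
    closure (connectedComponentIn V x) ∩ closure (connectedComponentIn V y) = ∅
  hU_open : IsOpen U
  hUV : closure U ⊆ V
  hU_comp_finite : {C : Set ℂ | ∃ x ∈ U, C = connectedComponentIn U x}.Finite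
  hU_disj : ∀ x ∈ U, ∀ y ∈ U, connectedComponentIn U x ≠ connectedComponentIn U y →
    closure (connectedComponentIn U x) ∩ closure (connectedComponentIn U y) = ∅
  hf_maps : Set.MapsTo f U V
  hf_holo : DifferentiableOn ℂ f U
  hf_proper : ∀ K ⊆ V, IsCompact K → IsCompact (U ∩ f ⁻¹' K)
  hf_crit : ∀ z ∈ U, deriv f z = 0 → ∀ n : ℕ, f^[n] z ∈ U

namespace Setup

variable (S : Setup)

/-- `K_f = {z ∈ U : f^n(z) ∈ U for all n}`. -/
def K : Set ℂ := {z | z ∈ S.U ∧ ∀ n : ℕ, S.f^[n] z ∈ S.U}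

/-- The set of critical points of `f`. -/
def Crit : Set ℂ := {z | z ∈ S.U ∧ deriv S.f z = 0}

/-- `preV n = f^{-n}(V)`, preimages being taken for the partial map `f : U → V`. -/
def preV : ℕ → Set ℂ
  | 0 => S.V
  | n+1 => S.U ∩ S.f ⁻¹' (preV n)

/-- `P` is a puzzle piece of depth `n`: a connected component of `f^{-n}(V)`. -/
def IsPieceOfDepth (n : ℕ) (P : Set ℂ) : Prop :=
  ∃ x ∈ S.preV n, P = connectedComponentIn (S.preV n) x

/-- `P` is a puzzle piece. -/
def IsPiece (P : Set ℂ) : Prop := ∃ n, S.IsPieceOfDepth n P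

/-- `piece n x = P_n(x)`, the puzzle piece of depth `n` containing `x`. -/
def piece (n : ℕ) (x : ℂ) : Set ℂ := connectedComponentIn (S.preV n) x

/-- `X` is a finite union of puzzle pieces. -/
def IsPieceUnion (X : Set ℂ) : Prop :=
  ∃ P : Set (Set ℂ), P.Finite ∧ (∀ Q ∈ P, S.IsPiece Q) ∧ X = ⋃₀ P

/-- `X` is nice: for every connected component `P` of `X` and every `n ≥ 1`,
`f^n(P)` is not strictly contained in `X`. -/
def Nice (X : Set ℂ) : Prop :=
  ∀ x ∈ X, ∀ n : ℕ, 1 ≤ n →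
    ¬ StrictlyContainedIn (S.f^[n] '' connectedComponentIn X x) X

/-- `preIm X n = f^{-n}(X)`, preimages being taken for the partial map `f : U → V`. -/
def preIm (X : Set ℂ) : ℕ → Set ℂ
  | 0 => X
  | n+1 => S.U ∩ S.f ⁻¹' (preIm X n)

/-- `D(X) = ⋃_{k ≥ 0} f^{-k}(X)`. -/
def D (X : Set ℂ) : Set ℂ := ⋃ k, S.preIm X k

/-- For `z ∈ D(X) ∖ X`, `k` is the landing time `k(z)`: the minimal positive
integer with `f^k(z) ∈ X`. -/
def IsLandingTime (X : Set ℂ) (z : ℂ) (k : ℕ) : Prop :=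
  1 ≤ k ∧ S.f^[k] z ∈ X ∧ ∀ j, 1 ≤ j → j < k → S.f^[j] z ∉ X

/-- `landComp X z k = Comp_z(f^{-k}(Comp_{f^k(z)}(X)))`; for `k = k(z)` this is
`L_z(X)`. -/
def landComp (X : Set ℂ) (z : ℂ) (k : ℕ) : Set ℂ :=
  connectedComponentIn (S.preIm (connectedComponentIn X (S.f^[k] z)) k) z

/-- `x` combinatorially accumulates to `y`: for every `n ≥ 0` there is `j ≥ 1`
with `f^j(x) ∈ P_n(y)`. -/
def Acc (x y : ℂ) : Prop := ∀ n : ℕ, ∃ j : ℕ, 1 ≤ j ∧ S.f^[j] x ∈ S.piece n y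

/-- `Forw(x) = {y ∈ K_f : x → y}`. -/
def Forw (x : ℂ) : Set ℂ := {y | y ∈ S.K ∧ S.Acc x y}

/-- The equivalence `c1 ∼ c2` on critical points. -/
def Equiv (c1 c2 : ℂ) : Prop := c1 = c2 ∨ (S.Acc c1 c2 ∧ S.Acc c2 c1)

/-- The class `[c]` of a critical point `c`. -/
def cls (c : ℂ) : Set ℂ := {c' | c' ∈ S.Crit ∧ S.Equiv c c'}

/-- `D(f) = Crit(f)/∼`, the set of equivalence classes. -/
def classes : Set (Set ℂ) := {A | ∃ c ∈ S.Crit, A = S.cls c}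

/-- `[c1] → [c2]`. -/
def ClassAcc (A B : Set ℂ) : Prop := ∃ c1 ∈ A, ∃ c2 ∈ B, S.Acc c1 c2

/-- The partial order on classes: `A ≤ B` iff `A = B` or `B → A`. -/
def ClassLe (A B : Set ℂ) : Prop := A = B ∨ S.ClassAcc B A

/-- The minimal elements of a family of classes w.r.t. `ClassLe`. -/
def minimalsIn (T : Set (Set ℂ)) : Set (Set ℂ) :=
  {A | A ∈ T ∧ ∀ B ∈ T, S.ClassLe B A → B = A}

/-- Auxiliary: `(D_k(f), D_0(f) ∪ ⋯ ∪ D_k(f))`. -/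
def DlevelAux : ℕ → Set (Set ℂ) × Set (Set ℂ)
  | 0 => (S.minimalsIn S.classes, S.minimalsIn S.classes)
  | k+1 =>
      (S.minimalsIn (S.classes \ (DlevelAux k).2),
        (DlevelAux k).2 ∪ S.minimalsIn (S.classes \ (DlevelAux k).2))

/-- `Dlevel k = D_k(f)`. -/
def Dlevel (k : ℕ) : Set (Set ℂ) := (S.DlevelAux k).1

/-- Each connected component of `V` contains at most one critical point. -/
def OneCritPerComp : Prop :=
  ∀ c ∈ S.Crit, ∀ c' ∈ S.Crit,
    connectedComponentIn S.V c = connectedComponentIn S.V c' → c = c'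

/-- Assumption (∗∗): if `c` does not combinatorially accumulate to `c'`, then
`f^j(c) ∉ P_0(c')` for all `j ≥ 1`. -/
def StarStar : Prop :=
  ∀ c ∈ S.Crit, ∀ c' ∈ S.Crit, ¬ S.Acc c c' →
    ∀ j : ℕ, 1 ≤ j → S.f^[j] c ∉ S.piece 0 c'

/-- `K_f(x)`, the connected component of `K_f` containing `x`. -/
def Kcomp (x : ℂ) : Set ℂ := connectedComponentIn S.K x

/-- `P_{n+k}(c1)` is a child of `P_n(c2)`: `f^k(P_{n+k}(c1)) = P_n(c2)` and
`f^{k-1}` maps `P_{n+k-1}(f(c1))` conformally onto `P_n(c2)`. -/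
def IsChild (c1 : ℂ) (k : ℕ) (n : ℕ) (c2 : ℂ) : Prop :=
  1 ≤ k ∧ S.f^[k] '' S.piece (n+k) c1 = S.piece n c2 ∧
  Set.InjOn (S.f^[k-1]) (S.piece (n+k-1) (S.f c1)) ∧
  S.f^[k-1] '' S.piece (n+k-1) (S.f c1) = S.piece n c2

/-- `c` is persistently recurrent: for every `n ≥ 0` and every `c' ∈ [c]`,
`P_n(c')` has only finitely many children. -/
def PersistentlyRecurrent (c : ℂ) : Prop :=
  ∀ n : ℕ, ∀ c' ∈ S.cls c,
    {Q : Set ℂ | ∃ c1 ∈ S.cls c, ∃ k : ℕ, S.IsChild c1 k n c' ∧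
      Q = S.piece (n+k) c1}.Finite

/-- `Crit_n(f)`. -/
def CritN : Set ℂ := {c | c ∈ S.Crit ∧ ∀ c' ∈ S.Crit, ¬ S.Acc c c'}

/-- `Crit_e(f)`. -/
def CritE : Set ℂ := {c | c ∈ S.Crit ∧ ¬ S.Acc c c ∧ ∃ c' ∈ S.Crit, S.Acc c c'}

/-- `Crit_r(f)`. -/
def CritR : Set ℂ := {c | c ∈ S.Crit ∧ S.Acc c c ∧ ¬ S.PersistentlyRecurrent c}

/-- `Crit_p(f)`. -/
def CritP : Set ℂ := {c | c ∈ S.Crit ∧ S.Acc c c ∧ S.PersistentlyRecurrent c}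

end Setup

/-!
Two puzzle pieces are nested or disjoint, so every component of `W₁ ∪ W₂` is a piece of `W₁` or of
`W₂`. Suppose `f^n` maps a component `R` strictly into a component `Q`. If both come from the same
`Wᵢ`, this contradicts the niceness of `Wᵢ`. If `R ⊆ W₂` and `Q ⊆ W₁`, the orbit of a point of
`[c₂]` enters the depth-0 piece of a point of `[c₁]`, which (∗∗) forbids because `[c₂]` does not
accumulate on `[c₁]`. If `R ⊆ W₁` and `Q ⊆ W₂`, then `R` contains a critical point `c`, whose
orbit stays in `U`; since `depth R ≤ depth Q`, the pull-back of `Q` along the orbit of `c` is a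
piece inside `R` that `f^n` maps onto `Q` (a proper map sends components of preimages onto
components), contradicting `f^n(R) ⊊ Q`.
-/

section Topology

variable {α : Type*} [TopologicalSpace α]

theorem connectedComponentIn_eq_of_subset {X Y : Set α} {x : α} (hYX : Y ⊆ X) (hx : x ∈ Y)
    (h : connectedComponentIn X x ⊆ Y) : connectedComponentIn Y x = connectedComponentIn X x :=
  (connectedComponentIn_mono x hYX).antisymm <|
    isPreconnected_connectedComponentIn.subset_connectedComponentIn
      (mem_connectedComponentIn (hYX hx)) h

-- The component of `x` is the maximal member of `F` containing `x`.
theorem connectedComponentIn_sUnion_mem {F : Set (Set α)} (hF : F.Finite)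
    (hopen : ∀ Q ∈ F, IsOpen Q) (hpre : ∀ Q ∈ F, IsPreconnected Q)
    (hnest : ∀ P ∈ F, ∀ Q ∈ F, (P ∩ Q).Nonempty → P ⊆ Q ∨ Q ⊆ P)
    {x : α} (hx : x ∈ ⋃₀ F) : connectedComponentIn (⋃₀ F) x ∈ F := by
  obtain ⟨R, ⟨hRF, hxR⟩, hRmax⟩ :=
    (hF.subset fun Q (hQ : Q ∈ F ∧ x ∈ Q) => hQ.1).exists_maximal hx
  have habsorb : ∀ Q ∈ F, (Q ∩ R).Nonempty → Q ⊆ R := fun Q hQ hQR =>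
    (hnest Q hQ R hRF hQR).elim id fun hRQ => hRmax ⟨hQ, hRQ hxR⟩ hRQ
  suffices connectedComponentIn (⋃₀ F) x = R from this ▸ hRF
  refine (isPreconnected_connectedComponentIn.subset_of_closure_inter_subset (hopen R hRF)
    ⟨x, mem_connectedComponentIn hx, hxR⟩ ?_).antisymm
      ((hpre R hRF).subset_connectedComponentIn hxR (subset_sUnion_of_mem hRF))
  rintro z ⟨hzR, hz⟩
  obtain ⟨Q, hQF, hzQ⟩ := connectedComponentIn_subset _ _ hz
  exact habsorb Q hQF (mem_closure_iff.mp hzR Q (hopen Q hQF) hzQ) hzQ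

theorem closure_connectedComponentIn_inter_subset {B : Set α} {x : α} :
    closure (connectedComponentIn B x) ∩ B ⊆ connectedComponentIn B x := by
  rintro p ⟨hp, hpB⟩
  have hx : x ∈ B := connectedComponentIn_nonempty_iff.mp (closure_nonempty_iff.mp ⟨p, hp⟩)
  exact (isPreconnected_connectedComponentIn.subset_closure (subset_insert p _)
    (insert_subset hp subset_closure)).subset_connectedComponentIn
      (mem_insert_of_mem p (mem_connectedComponentIn hx))
      (insert_subset hpB (connectedComponentIn_subset B x)) (mem_insert p _)

end Topology

namespace Setup

variable (S : Setup)

lemma U_subset_V : S.U ⊆ S.V := subset_closure.trans S.hUV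

lemma continuousOn_f : ContinuousOn S.f S.U := S.hf_holo.continuousOn

lemma isOpen_inter_preimage {A : Set ℂ} (hA : IsOpen A) : IsOpen (S.U ∩ S.f ⁻¹' A) :=
  S.continuousOn_f.isOpen_inter_preimage S.hU_open hA

lemma isOpen_preV : ∀ n, IsOpen (S.preV n)
  | 0 => S.hV_open
  | n + 1 => S.isOpen_inter_preimage (isOpen_preV n)

lemma preV_succ_subset : ∀ n, S.preV (n + 1) ⊆ S.preV n
  | 0 => fun _ hx => S.U_subset_V hx.1
  | n + 1 => inter_subset_inter_right _ (preimage_mono (preV_succ_subset n))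

lemma preV_antitone : Antitone S.preV := antitone_nat_of_succ_le S.preV_succ_subset

lemma mem_preV_add_of_iterate_mem {z : ℂ} (hz : ∀ j, S.f^[j] z ∈ S.U) (n : ℕ) {d : ℕ}
    (h : S.f^[n] z ∈ S.preV d) : z ∈ S.preV (n + d) := by
  induction n generalizing z with
  | zero => simpa using h
  | succ n ih =>
    rw [Nat.add_right_comm]
    refine ⟨by simpa using hz 0, ih (fun j => ?_) h⟩
    rw [← iterate_succ_apply]
    exact hz (j + 1)

-- By properness, a component on which `f` were constant would lie in a compact fibre and,
-- containing its closure, be clopen in `ℂ`.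
lemma not_const_on_connectedComponentIn {A : Set ℂ} (hA : IsOpen A) (hAV : A ⊆ S.V) {x : ℂ}
    (hx : x ∈ S.U ∩ S.f ⁻¹' A) (w : ℂ) :
    ¬ ∀ z ∈ connectedComponentIn (S.U ∩ S.f ⁻¹' A) x, S.f z = w := by
  set P := connectedComponentIn (S.U ∩ S.f ⁻¹' A) x
  intro hw
  have hxP : x ∈ P := mem_connectedComponentIn hx
  have hwA : w ∈ A := hw x hxP ▸ hx.2
  have hfiber : IsCompact (S.U ∩ S.f ⁻¹' {w}) :=
    S.hf_proper _ (singleton_subset_iff.2 (hAV hwA)) isCompact_singleton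
  have hPfiber : P ⊆ S.U ∩ S.f ⁻¹' {w} :=
    fun z hz => ⟨(connectedComponentIn_subset _ _ hz).1, hw z hz⟩
  have hclosure : closure P ⊆ S.U ∩ S.f ⁻¹' A :=
    (hfiber.isClosed.closure_subset_iff.2 hPfiber).trans
      (inter_subset_inter_right _ (preimage_mono (singleton_subset_iff.2 hwA)))
  have hclosed : IsClosed P := isClosed_of_closure_subset <|
    isPreconnected_connectedComponentIn.closure.subset_connectedComponentIn
      (subset_closure hxP) hclosure
  have hPuniv : P = univ :=
    IsClopen.eq_univ ⟨hclosed, (S.isOpen_inter_preimage hA).connectedComponentIn⟩ ⟨x, hxP⟩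
  exact noncompact_univ ℂ (hfiber.of_isClosed_subset isClosed_univ (hPuniv ▸ hPfiber))

lemma isOpen_image_connectedComponentIn {A : Set ℂ} (hA : IsOpen A) (hAV : A ⊆ S.V) {x : ℂ}
    (hx : x ∈ S.U ∩ S.f ⁻¹' A) :
    IsOpen (S.f '' connectedComponentIn (S.U ∩ S.f ⁻¹' A) x) := by
  have hanalytic : AnalyticOnNhd ℂ S.f (connectedComponentIn (S.U ∩ S.f ⁻¹' A) x) :=
    (S.hf_holo.analyticOnNhd S.hU_open).mono fun z hz => (connectedComponentIn_subset _ _ hz).1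
  obtain ⟨w, hw⟩ | hopen := hanalytic.is_constant_or_isOpen isPreconnected_connectedComponentIn
  · exact absurd hw (S.not_const_on_connectedComponentIn hA hAV hx w)
  · exact hopen _ subset_rfl (S.isOpen_inter_preimage hA).connectedComponentIn

lemma inter_closure_image_connectedComponentIn_subset {A : Set ℂ} (hAV : A ⊆ S.V) {x : ℂ} :
    A ∩ closure (S.f '' connectedComponentIn (S.U ∩ S.f ⁻¹' A) x) ⊆
      S.f '' connectedComponentIn (S.U ∩ S.f ⁻¹' A) x := by
  set P := connectedComponentIn (S.U ∩ S.f ⁻¹' A) x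
  rintro y ⟨hyA, hy⟩
  obtain ⟨r, hr, hball⟩ : ∃ r > 0, Metric.closedBall y r ⊆ S.V :=
    Metric.nhds_basis_closedBall.mem_iff.1 (S.hV_open.mem_nhds (hAV hyA))
  set T := closure P ∩ (S.U ∩ S.f ⁻¹' Metric.closedBall y r)
  have hT : IsCompact (S.f '' T) :=
    ((S.hf_proper _ hball (isCompact_closedBall y r)).inter_left
      isClosed_closure).image_of_continuousOn (S.continuousOn_f.mono fun z hz => hz.2.1)
  have hyT : y ∈ closure (S.f '' T) := by
    refine closure_mono ?_ (Metric.isOpen_ball.inter_closure ⟨Metric.mem_ball_self hr, hy⟩)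
    rintro _ ⟨hb, z, hz, rfl⟩
    exact ⟨z, ⟨subset_closure hz, (connectedComponentIn_subset _ _ hz).1,
      Metric.ball_subset_closedBall hb⟩, rfl⟩
  obtain ⟨p, ⟨hpP, hpU, -⟩, rfl⟩ := hT.isClosed.closure_subset hyT
  exact ⟨p, closure_connectedComponentIn_inter_subset ⟨hpP, hpU, hyA⟩, rfl⟩

lemma image_connectedComponentIn_inter_preimage {A : Set ℂ} (hA : IsOpen A) (hAV : A ⊆ S.V)
    {x : ℂ} (hx : x ∈ S.U ∩ S.f ⁻¹' A) :
    S.f '' connectedComponentIn (S.U ∩ S.f ⁻¹' A) x = connectedComponentIn A (S.f x) := by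
  have hxP := mem_connectedComponentIn hx
  refine subset_antisymm ?_ ?_
  · exact (isPreconnected_connectedComponentIn.image _ (S.continuousOn_f.mono
      fun z hz => (connectedComponentIn_subset _ _ hz).1)).subset_connectedComponentIn
        (mem_image_of_mem _ hxP)
        (image_subset_iff.2 fun z hz => (connectedComponentIn_subset _ _ hz).2)
  · exact isPreconnected_connectedComponentIn.subset_of_closure_inter_subset
      (S.isOpen_image_connectedComponentIn hA hAV hx)
      ⟨S.f x, mem_connectedComponentIn hx.2, mem_image_of_mem _ hxP⟩
      fun y hy => S.inter_closure_image_connectedComponentIn_subset hAV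
        ⟨connectedComponentIn_subset _ _ hy.2, hy.1⟩

lemma image_piece_succ {n : ℕ} {x : ℂ} (hx : x ∈ S.preV (n + 1)) :
    S.f '' S.piece (n + 1) x = S.piece n (S.f x) :=
  S.image_connectedComponentIn_inter_preimage (S.isOpen_preV n)
    (S.preV_antitone (Nat.zero_le n)) hx

lemma image_iterate_piece (n : ℕ) {d : ℕ} {x : ℂ} (hx : x ∈ S.preV (n + d)) :
    S.f^[n] '' S.piece (n + d) x = S.piece d (S.f^[n] x) := by
  induction n generalizing x with
  | zero => simp
  | succ n ih =>
    rw [Nat.add_right_comm] at hx ⊢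
    rw [iterate_succ, image_comp, S.image_piece_succ hx, ih hx.2, comp_apply]

variable {S}

lemma isPieceOfDepth_piece {n : ℕ} {x : ℂ} (hx : x ∈ S.preV n) :
    S.IsPieceOfDepth n (S.piece n x) :=
  ⟨x, hx, rfl⟩

lemma IsPieceOfDepth.isOpen {n : ℕ} {P : Set ℂ} (h : S.IsPieceOfDepth n P) : IsOpen P := by
  obtain ⟨y, _, rfl⟩ := h
  exact (S.isOpen_preV n).connectedComponentIn

lemma IsPieceOfDepth.isPreconnected {n : ℕ} {P : Set ℂ} (h : S.IsPieceOfDepth n P) :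
    IsPreconnected P := by
  obtain ⟨y, _, rfl⟩ := h
  exact isPreconnected_connectedComponentIn

lemma IsPieceOfDepth.subset_preV {n : ℕ} {P : Set ℂ} (h : S.IsPieceOfDepth n P) :
    P ⊆ S.preV n := by
  obtain ⟨y, _, rfl⟩ := h
  exact connectedComponentIn_subset _ _

lemma IsPieceOfDepth.eq_piece {n : ℕ} {P : Set ℂ} {x : ℂ} (h : S.IsPieceOfDepth n P)
    (hx : x ∈ P) : P = S.piece n x := by
  obtain ⟨y, _, rfl⟩ := h
  exact connectedComponentIn_eq hx

lemma IsPieceOfDepth.subset_piece_of_le {m n : ℕ} {P : Set ℂ} {x : ℂ}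
    (h : S.IsPieceOfDepth n P) (hmn : m ≤ n) (hx : x ∈ P) : P ⊆ S.piece m x :=
  h.isPreconnected.subset_connectedComponentIn hx (h.subset_preV.trans (S.preV_antitone hmn))

lemma IsPieceOfDepth.subset_of_le {m n : ℕ} {P Q : Set ℂ} (hP : S.IsPieceOfDepth n P)
    (hQ : S.IsPieceOfDepth m Q) (hmn : m ≤ n) (hPQ : (P ∩ Q).Nonempty) : P ⊆ Q := by
  obtain ⟨z, hzP, hzQ⟩ := hPQ
  exact hQ.eq_piece hzQ ▸ hP.subset_piece_of_le hmn hzP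

lemma IsPiece.subset_or_subset {P Q : Set ℂ} (hP : S.IsPiece P) (hQ : S.IsPiece Q)
    (hPQ : (P ∩ Q).Nonempty) : P ⊆ Q ∨ Q ⊆ P := by
  obtain ⟨n, hn⟩ := hP
  obtain ⟨m, hm⟩ := hQ
  rcases le_total m n with h | h
  · exact Or.inl (hn.subset_of_le hm h hPQ)
  · exact Or.inr (hm.subset_of_le hn h (inter_comm P Q ▸ hPQ))

lemma IsPieceOfDepth.subset_image_iterate {m d n : ℕ} {R Q : Set ℂ} {c : ℂ}
    (hR : S.IsPieceOfDepth m R) (hQ : S.IsPieceOfDepth d Q) (hmd : m ≤ d)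
    (horbit : ∀ j, S.f^[j] c ∈ S.U) (hcR : c ∈ R) (hcQ : S.f^[n] c ∈ Q) :
    Q ⊆ S.f^[n] '' R := by
  have hc : c ∈ S.preV (n + d) := S.mem_preV_add_of_iterate_mem horbit n (hQ.subset_preV hcQ)
  rw [hQ.eq_piece hcQ, ← S.image_iterate_piece n hc]
  exact image_mono ((isPieceOfDepth_piece hc).subset_of_le hR (by omega)
    ⟨c, mem_connectedComponentIn hc, hcR⟩)

lemma connectedComponentIn_sUnion_mem_of_isPiece {F : Set (Set ℂ)} (hF : F.Finite)
    (hpiece : ∀ Q ∈ F, S.IsPiece Q) {x : ℂ} (hx : x ∈ ⋃₀ F) :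
    connectedComponentIn (⋃₀ F) x ∈ F :=
  connectedComponentIn_sUnion_mem hF
    (fun Q hQ => (hpiece Q hQ).elim fun _ h => h.isOpen)
    (fun Q hQ => (hpiece Q hQ).elim fun _ h => h.isPreconnected)
    (fun P hP Q hQ => (hpiece P hP).subset_or_subset (hpiece Q hQ)) hx

lemma Nice.not_image_ssubset {X Y : Set ℂ} (hY : S.Nice Y) (hYX : Y ⊆ X) {x y : ℂ}
    (hx : x ∈ Y) (hy : y ∈ Y) (hxY : connectedComponentIn X x ⊆ Y)
    (hyY : connectedComponentIn X y ⊆ Y) {n : ℕ} (hn : 1 ≤ n) :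
    ¬ S.f^[n] '' connectedComponentIn X x ⊂ connectedComponentIn X y := by
  rw [← connectedComponentIn_eq_of_subset hYX hx hxY,
    ← connectedComponentIn_eq_of_subset hYX hy hyY]
  exact fun h => hY x hx n hn ⟨y, hy, h⟩

end Setup

theorem stmt_11_general (S : Setup) (h2 : S.StarStar)
    (c1 c2 : ℂ)
    (W1 W2 : Set ℂ) (P1 P2 : Set (Set ℂ))
    (hP1fin : P1.Finite) (hP1p : ∀ P ∈ P1, S.IsPiece P)
    (hP1c : ∀ P ∈ P1, ∃ c ∈ S.cls c1, c ∈ P)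
    (hW1 : W1 = ⋃₀ P1) (hW1n : S.Nice W1)
    (hP2fin : P2.Finite) (hP2p : ∀ P ∈ P2, S.IsPiece P)
    (hP2c : ∀ P ∈ P2, ∃ c ∈ S.cls c2, c ∈ P)
    (hW2 : W2 = ⋃₀ P2) (hW2n : S.Nice W2)
    (hacc2 : ¬ S.ClassAcc (S.cls c2) (S.cls c1))
    (hdepth : ∀ P ∈ P1, ∀ Q ∈ P2, ∀ m n : ℕ,
      S.IsPieceOfDepth m P → S.IsPieceOfDepth n Q → m ≤ n) :
    S.Nice (W1 ∪ W2) := by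
  rintro x hx n hn ⟨y, hy, hsub⟩
  have hunion : W1 ∪ W2 = ⋃₀ (P1 ∪ P2) := by rw [hW1, hW2, sUnion_union]
  have hcomp : ∀ z ∈ W1 ∪ W2, connectedComponentIn (W1 ∪ W2) z ∈ P1 ∪ P2 := fun z hz =>
    hunion ▸ S.connectedComponentIn_sUnion_mem_of_isPiece (hP1fin.union hP2fin)
      (fun Q hQ => hQ.elim (hP1p Q) (hP2p Q)) (hunion ▸ hz)
  set R := connectedComponentIn (W1 ∪ W2) x
  set Q := connectedComponentIn (W1 ∪ W2) y
  have hxR : x ∈ R := mem_connectedComponentIn hx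
  have hyQ : y ∈ Q := mem_connectedComponentIn hy
  rcases hcomp x hx with hR | hR <;> rcases hcomp y hy with hQ | hQ
  · have hRW : R ⊆ W1 := hW1 ▸ subset_sUnion_of_mem hR
    have hQW : Q ⊆ W1 := hW1 ▸ subset_sUnion_of_mem hQ
    exact hW1n.not_image_ssubset subset_union_left (hRW hxR) (hQW hyQ) hRW hQW hn hsub
  · obtain ⟨c, hc, hcR⟩ := hP1c R hR
    obtain ⟨m, hm⟩ := hP1p R hR
    obtain ⟨d, hd⟩ := hP2p Q hQ
    exact hsub.not_subset (hm.subset_image_iterate hd (hdepth R hR Q hQ m d hm hd)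
      (S.hf_crit c hc.1.1 hc.1.2) hcR (hsub.subset (mem_image_of_mem _ hcR)))
  · obtain ⟨c', hc', hc'R⟩ := hP2c R hR
    obtain ⟨c, hc, hcQ⟩ := hP1c Q hQ
    obtain ⟨k, hk⟩ := hP1p Q hQ
    exact h2 c' hc'.1 c hc.1 (fun hacc => hacc2 ⟨c', hc', c, hc, hacc⟩) n hn
      (hk.subset_piece_of_le (Nat.zero_le k) hcQ (hsub.subset (mem_image_of_mem _ hc'R)))
  · have hRW : R ⊆ W2 := hW2 ▸ subset_sUnion_of_mem hR
    have hQW : Q ⊆ W2 := hW2 ▸ subset_sUnion_of_mem hQ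
    exact hW2n.not_image_ssubset subset_union_right (hRW hxR) (hQW hyQ) hRW hQW hn hsub

/-- If `[c1] ≠ [c2]`, `W_i` is a nice set consisting of finitely
many puzzle pieces each containing a point of `[c_i]`, `[c2]` does not
accumulate to `[c1]`, and the minimal depth of the pieces of `W_2` is at least
the maximal depth of the pieces of `W_1`, then `W_1 ∪ W_2` is nice. -/
theorem stmt_11 (S : Setup) (h1 : S.OneCritPerComp) (h2 : S.StarStar)
    (c1 c2 : ℂ) (hc1 : c1 ∈ S.Crit) (hc2 : c2 ∈ S.Crit)
    (hne : S.cls c1 ≠ S.cls c2)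
    (W1 W2 : Set ℂ) (P1 P2 : Set (Set ℂ))
    (hP1fin : P1.Finite) (hP1p : ∀ P ∈ P1, S.IsPiece P)
    (hP1c : ∀ P ∈ P1, ∃ c ∈ S.cls c1, c ∈ P)
    (hW1 : W1 = ⋃₀ P1) (hW1n : S.Nice W1)
    (hP2fin : P2.Finite) (hP2p : ∀ P ∈ P2, S.IsPiece P)
    (hP2c : ∀ P ∈ P2, ∃ c ∈ S.cls c2, c ∈ P)
    (hW2 : W2 = ⋃₀ P2) (hW2n : S.Nice W2)
    (hacc2 : ¬ S.ClassAcc (S.cls c2) (S.cls c1))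
    (hdepth : ∀ P ∈ P1, ∀ Q ∈ P2, ∀ m n : ℕ,
      S.IsPieceOfDepth m P → S.IsPieceOfDepth n Q → m ≤ n) :
    S.Nice (W1 ∪ W2) :=
  stmt_11_general S h2 c1 c2 W1 W2 P1 P2 hP1fin hP1p hP1c hW1 hW1n hP2fin hP2p hP2c hW2 hW2n hacc2
    hdepth
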